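/- arXiv:2003.11466 — 3 statements merged into one kernel-verified Lean document; each statement's English description precedes it below -/
import Mathlib

section
/- Let f : (0,∞) → ℝ satisfy f(s) ≥ c₀ s − c₁ for all s > 0, where c₀, c₁ > 0. Then there exists R₀ = R₀(c₀, n) > 0 such that for every x₀ ∈ ℝⁿ and every positive function u ∈ C²(cl(B_{2R₀}(x₀))) satisfying the supersolution inequality −Δu ≥ f(u) in cl(B_{2R₀}(x₀)), one has ∫_{B_{R₀}(x₀)} u(x) dx ≤ C, where C depends only on c₀, c₁, n. -/
/-!
Test the supersolution inequality against the product bump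
`φ(x) = ∏ᵢ (1 + cos (π (xᵢ - cᵢ) / a)) / 2` on the cube of half-side `a` around `c`. Since `φ`
and `∂ᵢφ` vanish on the faces `xᵢ = cᵢ ± a`, Green's identity gives `∫ φ Δu = ∫ u Δφ`, and
`Δφ ≥ -n (π / a)² φ`. Choosing `a` with `n (π / a)² ≤ c₀ / 2` turns `Δu ≤ c₁ - c₀ u` into
`(c₀ / 2) ∫ u φ ≤ c₁ (2a)ⁿ`; as `φ ≥ 2⁻ⁿ` on the half cube, this bounds `∫ u` over the ball of
radius `a / 2`. Finally `B_{R₀}(x₀)`, `R₀ = a (√n + 1)`, is covered by a fixed finite family of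
translates of that ball whose cubes stay inside `B_{2R₀}(x₀)`.
-/

open MeasureTheory Set Metric

/-- Partial derivative in the `i`-th coordinate direction. -/
noncomputable def pd {m : ℕ} (i : Fin m) (u : EuclideanSpace ℝ (Fin m) → ℝ)
    (x : EuclideanSpace ℝ (Fin m)) : ℝ :=
  fderiv ℝ u x (EuclideanSpace.single i 1)

/-- The Laplacian `Δu = ∑ ∂²u/∂xᵢ²`. -/
noncomputable def lap {m : ℕ} (u : EuclideanSpace ℝ (Fin m) → ℝ)
    (x : EuclideanSpace ℝ (Fin m)) : ℝ :=
  ∑ i, pd i (fun y => pd i u y) x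

namespace SupersolutionL1

open Real Finset

lemma setIntegral_le_card_mul_of_subset_biUnion {α ι : Type*} [MeasurableSpace α]
    {μ : Measure α} {f : α → ℝ} {S K : Set α} (T : Finset ι) (s : ι → Set α)
    (hs : ∀ i ∈ T, MeasurableSet (s i)) (hS : S ⊆ ⋃ i ∈ T, s i) (hK : ⋃ i ∈ T, s i ⊆ K)
    (hf : ∀ x ∈ K, 0 ≤ f x) (hint : IntegrableOn f K μ) {C : ℝ}
    (hC : ∀ i ∈ T, ∫ x in s i, f x ∂μ ≤ C) :
    ∫ x in S, f x ∂μ ≤ T.card * C := by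
  have hsK (i : T) : s i ⊆ K := (subset_iUnion₂ (s := fun i (_ : i ∈ T) => s i) i i.2).trans hK
  have hsum : Integrable f (Measure.sum fun i : T => μ.restrict (s i)) :=
    integrable_sum_measure (fun i => hint.mono_set (hsK i)) Summable.of_finite
  calc ∫ x in S, f x ∂μ ≤ ∫ x in ⋃ i ∈ T, s i, f x ∂μ :=
        setIntegral_mono_set (hint.mono_set hK)
          (ae_restrict_of_forall_mem (T.measurableSet_biUnion hs) fun x hx => hf x (hK hx))
          hS.eventuallyLE
    _ ≤ ∫ x, f x ∂Measure.sum fun i : T => μ.restrict (s i) :=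
        integral_mono_measure (by simpa using Measure.restrict_biUnion_le T.countable_toSet)
          (Measure.ae_sum_iff.2 fun i =>
            ae_restrict_of_forall_mem (hs i i.2) fun x hx => hf x (hsK i hx)) hsum
    _ = ∑ i ∈ T, ∫ x in s i, f x ∂μ := by
        rw [integral_sum_measure hsum, tsum_fintype, sum_coe_sort T fun i => ∫ x in s i, f x ∂μ]
    _ ≤ T.card * C := by simpa using sum_le_sum hC

lemma exists_finset_translate_cover {E : Type*} [NormedAddCommGroup E] [ProperSpace E]
    (R : ℝ) {r : ℝ} (hr : 0 < r) :
    ∃ T : Finset E, (∀ p ∈ T, ‖p‖ ≤ R) ∧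
      ∀ x₀ : E, closedBall x₀ R ⊆ ⋃ p ∈ T, ball (x₀ + p) r := by
  obtain ⟨t, hts, htf, hcov⟩ := finite_cover_balls_of_compact (isCompact_closedBall (0 : E) R) hr
  refine ⟨htf.toFinset, fun p hp => by simpa using hts (htf.mem_toFinset.1 hp), fun x₀ x hx => ?_⟩
  have hx' : x - x₀ ∈ closedBall 0 R := by simpa [dist_eq_norm] using hx
  obtain ⟨p, hp, hxp⟩ := mem_iUnion₂.1 (hcov hx')
  refine mem_iUnion₂.2 ⟨p, htf.mem_toFinset.2 hp, ?_⟩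
  rw [mem_ball, dist_eq_norm] at hxp ⊢
  rwa [sub_sub] at hxp

lemma dist_le_mul_sqrt_card {ι : Type*} [Fintype ι] {x y : EuclideanSpace ℝ ι} {r : ℝ}
    (hr : 0 ≤ r) (h : ∀ i, |x i - y i| ≤ r) : dist x y ≤ r * √(Fintype.card ι) := by
  rw [EuclideanSpace.dist_eq, ← sqrt_sq hr, ← sqrt_mul (sq_nonneg r)]
  gcongr
  calc ∑ i, dist (x i) (y i) ^ 2 ≤ ∑ _i : ι, r ^ 2 :=
        sum_le_sum fun i _ => by rw [Real.dist_eq]; exact pow_le_pow_left₀ (abs_nonneg _) (h i) 2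
    _ = r ^ 2 * Fintype.card ι := by simp [mul_comm]

noncomputable def cosBump (a t : ℝ) : ℝ := (1 + cos (π / a * t)) / 2

noncomputable def cosBump' (a t : ℝ) : ℝ := -(π / a) * sin (π / a * t) / 2

noncomputable def cosBump'' (a t : ℝ) : ℝ := -(π / a) ^ 2 * cos (π / a * t) / 2

lemma hasDerivAt_cosBump (a t : ℝ) : HasDerivAt (cosBump a) (cosBump' a t) t := by
  have h : HasDerivAt (fun t => π / a * t) (π / a) t := by
    simpa using (hasDerivAt_id t).const_mul (π / a)
  exact ((h.cos.const_add 1).div_const 2).congr_deriv (by simp only [cosBump']; ring)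

lemma hasDerivAt_cosBump' (a t : ℝ) : HasDerivAt (cosBump' a) (cosBump'' a t) t := by
  have h : HasDerivAt (fun t => π / a * t) (π / a) t := by
    simpa using (hasDerivAt_id t).const_mul (π / a)
  exact ((h.sin.const_mul (-(π / a))).div_const 2).congr_deriv (by simp only [cosBump'']; ring)

lemma contDiff_cosBump (a : ℝ) : ContDiff ℝ 2 (cosBump a) := by
  unfold cosBump
  fun_prop

lemma cosBump_nonneg (a t : ℝ) : 0 ≤ cosBump a t := by
  have := neg_one_le_cos (π / a * t)
  unfold cosBump
  linarith

lemma cosBump_le_one (a t : ℝ) : cosBump a t ≤ 1 := by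
  have := cos_le_one (π / a * t)
  unfold cosBump
  linarith

lemma neg_sq_mul_cosBump_le_cosBump'' (a t : ℝ) :
    -(π / a) ^ 2 * cosBump a t ≤ cosBump'' a t := by
  have := neg_one_le_cos (π / a * t)
  unfold cosBump cosBump''
  nlinarith [sq_nonneg (π / a)]

lemma half_le_cosBump {a t : ℝ} (ha : 0 < a) (ht : |t| ≤ a / 2) : 1 / 2 ≤ cosBump a t := by
  have hπa : |π / a * t| ≤ π / 2 := by
    rw [abs_mul, abs_of_pos (by positivity)]
    calc π / a * |t| ≤ π / a * (a / 2) := by gcongr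
      _ = π / 2 := by field_simp
  have := cos_nonneg_of_mem_Icc ⟨by linarith [neg_abs_le (π / a * t)], (abs_le.1 hπa).2⟩
  unfold cosBump
  linarith

lemma cosBump_eq_zero_and_cosBump'_eq_zero {a t : ℝ} (ha : 0 < a) (ht : t = a ∨ t = -a) :
    cosBump a t = 0 ∧ cosBump' a t = 0 := by
  have h : π / a * a = π := by field_simp
  rcases ht with rfl | rfl <;> simp [cosBump, cosBump', h]

section Laplacian

variable {m : ℕ} {U : Set (Fin m → ℝ)} {v w : (Fin m → ℝ) → ℝ}

/- `pd` and `lap` transported to `Fin m → ℝ`, where Mathlib's divergence theorem on boxes is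
stated. -/

noncomputable def pdPi (i : Fin m) (v : (Fin m → ℝ) → ℝ) (x : Fin m → ℝ) : ℝ :=
  fderiv ℝ v x (Pi.single i 1)

noncomputable def lapPi (v : (Fin m → ℝ) → ℝ) (x : Fin m → ℝ) : ℝ :=
  ∑ i, pdPi i (pdPi i v) x

lemma contDiffOn_pdPi {n k : WithTop ℕ∞} (hv : ContDiffOn ℝ n v U) (hU : IsOpen U)
    (hk : k + 1 ≤ n) (i : Fin m) : ContDiffOn ℝ k (pdPi i v) U :=
  (ContinuousLinearMap.apply ℝ ℝ (Pi.single i 1 : Fin m → ℝ)).contDiff.comp_contDiffOn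
    (hv.fderiv_of_isOpen hU hk)

lemma continuousOn_lapPi (hv : ContDiffOn ℝ 2 v U) (hU : IsOpen U) :
    ContinuousOn (lapPi v) U :=
  continuousOn_finsetSum _ fun i _ => (contDiffOn_pdPi (k := 0)
    (contDiffOn_pdPi (k := 1) hv hU (by norm_num) i) hU (by norm_num) i).continuousOn

lemma hasFDerivAt_mul_pdPi_sub_mul_pdPi (hv : ContDiffOn ℝ 2 v U) (hw : ContDiffOn ℝ 2 w U)
    (hU : IsOpen U) (i : Fin m) {x : Fin m → ℝ} (hx : x ∈ U) :
    HasFDerivAt (fun y => v y * pdPi i w y - w y * pdPi i v y)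
      (v x • fderiv ℝ (pdPi i w) x + pdPi i w x • fderiv ℝ v x -
        (w x • fderiv ℝ (pdPi i v) x + pdPi i v x • fderiv ℝ w x)) x := by
  have hdiff {u : (Fin m → ℝ) → ℝ} (hu : ContDiffOn ℝ 2 u U) :
      HasFDerivAt u (fderiv ℝ u x) x ∧ HasFDerivAt (pdPi i u) (fderiv ℝ (pdPi i u) x) x :=
    ⟨((hu.contDiffAt (hU.mem_nhds hx)).differentiableAt (by norm_num)).hasFDerivAt,
      (((contDiffOn_pdPi (k := 1) hu hU (by norm_num) i).contDiffAt
        (hU.mem_nhds hx)).differentiableAt (by norm_num)).hasFDerivAt⟩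
  exact ((hdiff hv).1.mul (hdiff hw).2).sub ((hdiff hw).1.mul (hdiff hv).2)

theorem setIntegral_Icc_mul_lapPi_comm {lo hi : Fin m → ℝ} (hle : lo ≤ hi) (hU : IsOpen U)
    (hsub : Icc lo hi ⊆ U) (hv : ContDiffOn ℝ 2 v U) (hw : ContDiffOn ℝ 2 w U)
    (hwb : ∀ x i, x i = lo i ∨ x i = hi i → w x = 0 ∧ pdPi i w x = 0) :
    ∫ x in Icc lo hi, v x * lapPi w x = ∫ x in Icc lo hi, w x * lapPi v x := by
  have hcont (f g : (Fin m → ℝ) → ℝ) (hf : ContDiffOn ℝ 2 f U) (hg : ContDiffOn ℝ 2 g U) :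
      ContinuousOn (fun x => f x * lapPi g x) (Icc lo hi) :=
    (hf.continuousOn.mul (continuousOn_lapPi hg hU)).mono hsub
  rw [← sub_eq_zero, ← integral_sub ((hcont v w hv hw).integrableOn_compact isCompact_Icc)
    ((hcont w v hw hv).integrableOn_compact isCompact_Icc)]
  cases m with
  | zero => simp [lapPi]
  | succ k =>
  set f : Fin (k + 1) → (Fin (k + 1) → ℝ) → ℝ := fun i x => v x * pdPi i w x - w x * pdPi i v x
  set f' : Fin (k + 1) → (Fin (k + 1) → ℝ) → (Fin (k + 1) → ℝ) →L[ℝ] ℝ := fun i x =>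
    v x • fderiv ℝ (pdPi i w) x + pdPi i w x • fderiv ℝ v x -
      (w x • fderiv ℝ (pdPi i v) x + pdPi i v x • fderiv ℝ w x)
  have hdiv (x) : ∑ i, f' i x (Pi.single i 1) = v x * lapPi w x - w x * lapPi v x := by
    simp only [f', lapPi, mul_sum, ← sum_sub_distrib]
    refine sum_congr rfl fun i _ => ?_
    simp only [sub_apply, add_apply, smul_apply, smul_eq_mul, pdPi]
    ring
  have key := integral_divergence_of_hasFDerivAt_off_countable' lo hi hle f f' ∅ countable_empty
    (fun i => ?_) (fun x hx i => ?_) (((hcont v w hv hw).sub (hcont w v hw hv)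
      |>.integrableOn_compact isCompact_Icc).congr_fun (fun x _ => (hdiv x).symm) measurableSet_Icc)
  · simp only [hdiv] at key
    rw [key]
    refine sum_eq_zero fun i _ => ?_
    simp [f, hwb _ i (Or.inl (Fin.insertNth_apply_same _ _ _)),
      hwb _ i (Or.inr (Fin.insertNth_apply_same _ _ _))]
  · exact fun x hx => (hasFDerivAt_mul_pdPi_sub_mul_pdPi hv hw hU i (hsub hx)).continuousAt
      |>.continuousWithinAt
  · refine hasFDerivAt_mul_pdPi_sub_mul_pdPi hv hw hU i (hsub ?_)
    rw [← pi_univ_Icc]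
    exact pi_mono (fun j _ => Set.Ioo_subset_Icc_self) hx.1

end Laplacian

section CubeBump

variable {m : ℕ}

noncomputable def cubeBump (a : ℝ) (c : Fin m → ℝ) (s : Finset (Fin m)) (x : Fin m → ℝ) : ℝ :=
  ∏ i ∈ s, cosBump a (x i - c i)

variable (a : ℝ) (c : Fin m → ℝ)

lemma hasFDerivAt_cubeBump (s : Finset (Fin m)) (x : Fin m → ℝ) :
    HasFDerivAt (cubeBump a c s)
      (∑ j ∈ s, cubeBump a c (s.erase j) x •
        cosBump' a (x j - c j) • (ContinuousLinearMap.proj j : (Fin m → ℝ) →L[ℝ] ℝ)) x :=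
  HasFDerivAt.finsetProd fun j _ =>
    (hasDerivAt_cosBump a _).comp_hasFDerivAt x ((hasFDerivAt_apply j x).sub_const (c j))

lemma pdPi_cubeBump (s : Finset (Fin m)) (i : Fin m) (x : Fin m → ℝ) :
    pdPi i (cubeBump a c s) x =
      if i ∈ s then cosBump' a (x i - c i) * cubeBump a c (s.erase i) x else 0 := by
  simp [pdPi, (hasFDerivAt_cubeBump a c s x).fderiv, Pi.single_apply, mul_comm]

lemma pdPi_pdPi_cubeBump (i : Fin m) (x : Fin m → ℝ) :
    pdPi i (pdPi i (cubeBump a c univ)) x =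
      cosBump'' a (x i - c i) * cubeBump a c (univ.erase i) x := by
  have hfun : pdPi i (cubeBump a c univ) =
      fun y => cosBump' a (y i - c i) * cubeBump a c (univ.erase i) y := by
    ext y
    simp [pdPi_cubeBump]
  have hP := hasFDerivAt_cubeBump a c (univ.erase i) x
  have hd : HasFDerivAt (fun y => cosBump' a (y i - c i) * cubeBump a c (univ.erase i) y) _ x :=
    ((hasDerivAt_cosBump' a _).comp_hasFDerivAt x
      ((hasFDerivAt_apply i x).sub_const (c i))).mul hP
  have h0 : fderiv ℝ (cubeBump a c (univ.erase i)) x (Pi.single i 1) = 0 := by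
    simpa [pdPi] using pdPi_cubeBump a c (univ.erase i) i x
  rw [hfun, pdPi, hd.fderiv]
  simp [h0, ← hP.fderiv, mul_comm]

lemma cubeBump_univ_eq_mul (i : Fin m) (x : Fin m → ℝ) :
    cubeBump a c univ x = cosBump a (x i - c i) * cubeBump a c (univ.erase i) x :=
  (mul_prod_erase univ _ (mem_univ i)).symm

lemma cubeBump_nonneg (s : Finset (Fin m)) (x : Fin m → ℝ) : 0 ≤ cubeBump a c s x :=
  prod_nonneg fun _ _ => cosBump_nonneg a _

lemma cubeBump_le_one (s : Finset (Fin m)) (x : Fin m → ℝ) : cubeBump a c s x ≤ 1 :=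
  prod_le_one (fun _ _ => cosBump_nonneg a _) fun _ _ => cosBump_le_one a _

lemma contDiff_cubeBump (s : Finset (Fin m)) : ContDiff ℝ 2 (cubeBump a c s) :=
  contDiff_prod fun i _ => (contDiff_cosBump a).comp ((contDiff_apply ℝ ℝ i).sub contDiff_const)

lemma neg_mul_cubeBump_le_lapPi_cubeBump (x : Fin m → ℝ) :
    -(m * (π / a) ^ 2) * cubeBump a c univ x ≤ lapPi (cubeBump a c univ) x := by
  calc -(m * (π / a) ^ 2) * cubeBump a c univ x
      = ∑ i : Fin m, -(π / a) ^ 2 * cosBump a (x i - c i) * cubeBump a c (univ.erase i) x := by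
        simp only [mul_assoc, ← cubeBump_univ_eq_mul, sum_const, card_univ, Fintype.card_fin,
          nsmul_eq_mul]
        ring
    _ ≤ lapPi (cubeBump a c univ) x := by
        simp only [lapPi, pdPi_pdPi_cubeBump]
        gcongr with i
        · exact cubeBump_nonneg a c _ x
        · exact neg_sq_mul_cosBump_le_cosBump'' a _

lemma half_pow_le_cubeBump {a : ℝ} (ha : 0 < a) {x : Fin m → ℝ} (hx : ∀ i, |x i - c i| ≤ a / 2) :
    (1 / 2) ^ m ≤ cubeBump a c univ x := by
  calc ((1 : ℝ) / 2) ^ m = ∏ _i : Fin m, (1 / 2 : ℝ) := by simp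
    _ ≤ cubeBump a c univ x :=
      prod_le_prod (fun _ _ => by norm_num) fun i _ => half_le_cosBump ha (hx i)

lemma cubeBump_eq_zero_and_pdPi_eq_zero {a : ℝ} (ha : 0 < a) {x : Fin m → ℝ} {i : Fin m}
    (hx : x i = c i - a ∨ x i = c i + a) :
    cubeBump a c univ x = 0 ∧ pdPi i (cubeBump a c univ) x = 0 := by
  obtain ⟨h₀, h₁⟩ := cosBump_eq_zero_and_cosBump'_eq_zero (t := x i - c i) ha
    (hx.symm.imp (fun h => by linarith) fun h => by linarith)
  rw [pdPi_cubeBump, cubeBump_univ_eq_mul a c i]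
  simp [h₀, h₁]

end CubeBump

section BoxEstimate

variable {m : ℕ}

def cube (c : Fin m → ℝ) (r : ℝ) : Set (Fin m → ℝ) := Icc (fun i => c i - r) (fun i => c i + r)

lemma mem_cube {c x : Fin m → ℝ} {r : ℝ} : x ∈ cube c r ↔ ∀ i, |x i - c i| ≤ r := by
  simp only [cube, Set.mem_Icc, Pi.le_def, abs_sub_le_iff, ← forall_and]
  exact forall_congr' fun i =>
    ⟨fun h => ⟨by linarith, by linarith⟩, fun h => ⟨by linarith, by linarith⟩⟩

lemma cube_subset_cube (c : Fin m → ℝ) {r s : ℝ} (h : r ≤ s) : cube c r ⊆ cube c s :=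
  fun _ hx => mem_cube.2 fun i => (mem_cube.1 hx i).trans h

lemma volume_real_cube (c : Fin m → ℝ) {r : ℝ} (hr : 0 ≤ r) :
    volume.real (cube c r) = (2 * r) ^ m := by
  rw [measureReal_def, cube, Real.volume_Icc_pi_toReal fun i => by linarith]
  simp [two_mul]

variable {a c₀ c₁ : ℝ} {c : Fin m → ℝ} {U : Set (Fin m → ℝ)} {v : (Fin m → ℝ) → ℝ}

theorem setIntegral_mul_cubeBump_le (ha : 0 < a) (hc₀ : 0 < c₀) (hc₁ : 0 ≤ c₁)
    (hfreq : m * (π / a) ^ 2 ≤ c₀ / 2) (hU : IsOpen U) (hv : ContDiffOn ℝ 2 v U)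
    (hsub : cube c a ⊆ U) (hpos : ∀ x ∈ cube c a, 0 ≤ v x)
    (hsup : ∀ x ∈ cube c a, lapPi v x ≤ c₁ - c₀ * v x) :
    ∫ x in cube c a, v x * cubeBump a c univ x ≤ 2 * c₁ / c₀ * (2 * a) ^ m := by
  set φ := cubeBump a c univ
  have hφ : ContDiffOn ℝ 2 φ U := (contDiff_cubeBump a c univ).contDiffOn
  have hint {f : (Fin m → ℝ) → ℝ} (hf : ContinuousOn f U) : IntegrableOn f (cube c a) :=
    (hf.mono hsub).integrableOn_compact isCompact_Icc
  have hvφ : IntegrableOn (fun x => v x * φ x) (cube c a) :=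
    hint (hv.continuousOn.mul hφ.continuousOn)
  have hgreen : ∫ x in cube c a, v x * lapPi φ x = ∫ x in cube c a, φ x * lapPi v x :=
    setIntegral_Icc_mul_lapPi_comm (fun i => by linarith) hU hsub hv hφ
      fun x i hx => cubeBump_eq_zero_and_pdPi_eq_zero c ha hx
  have hlow : -(m * (π / a) ^ 2) * ∫ x in cube c a, v x * φ x ≤
      ∫ x in cube c a, v x * lapPi φ x := by
    rw [← integral_const_mul]
    refine setIntegral_mono_on (hvφ.const_mul _)
      (hint (hv.continuousOn.mul (continuousOn_lapPi hφ hU))) measurableSet_Icc fun x hx => ?_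
    nlinarith [neg_mul_cubeBump_le_lapPi_cubeBump a c x, hpos x hx]
  have hup : ∫ x in cube c a, φ x * lapPi v x ≤
      c₁ * (∫ x in cube c a, φ x) - c₀ * ∫ x in cube c a, v x * φ x := by
    rw [← integral_const_mul, ← integral_const_mul,
      ← integral_sub ((hint hφ.continuousOn).const_mul _) (hvφ.const_mul _)]
    refine setIntegral_mono_on (hint (hφ.continuousOn.mul (continuousOn_lapPi hv hU)))
      (((hint hφ.continuousOn).const_mul _).sub (hvφ.const_mul _)) measurableSet_Icc
      fun x hx => ?_
    nlinarith [mul_le_mul_of_nonneg_left (hsup x hx) (cubeBump_nonneg a c univ x)]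
  have hφle : ∫ x in cube c a, φ x ≤ (2 * a) ^ m := by
    calc ∫ x in cube c a, φ x ≤ ∫ x in cube c a, (1 : ℝ) :=
          setIntegral_mono_on (hint hφ.continuousOn) (integrableOn_const measure_Icc_lt_top.ne)
            measurableSet_Icc fun x _ => cubeBump_le_one a c univ x
      _ = (2 * a) ^ m := by simp [volume_real_cube c ha.le]
  have hnn : 0 ≤ ∫ x in cube c a, v x * φ x :=
    setIntegral_nonneg measurableSet_Icc fun x hx =>
      mul_nonneg (hpos x hx) (cubeBump_nonneg a c univ x)
  rw [div_mul_eq_mul_div, le_div_iff₀ hc₀]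
  nlinarith [mul_le_mul_of_nonneg_left hφle hc₁, mul_le_mul_of_nonneg_right hfreq hnn]

theorem setIntegral_cube_half_le (ha : 0 < a) (hc₀ : 0 < c₀) (hc₁ : 0 ≤ c₁)
    (hfreq : m * (π / a) ^ 2 ≤ c₀ / 2) (hU : IsOpen U) (hv : ContDiffOn ℝ 2 v U)
    (hsub : cube c a ⊆ U) (hpos : ∀ x ∈ cube c a, 0 ≤ v x)
    (hsup : ∀ x ∈ cube c a, lapPi v x ≤ c₁ - c₀ * v x) :
    ∫ x in cube c (a / 2), v x ≤ 2 ^ m * (2 * c₁ / c₀ * (2 * a) ^ m) := by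
  set φ := cubeBump a c univ
  have hhalf : cube c (a / 2) ⊆ cube c a := cube_subset_cube c (half_le_self ha.le)
  have hvφ : IntegrableOn (fun x => v x * φ x) (cube c a) :=
    ((hv.continuousOn.mono hsub).mul (contDiff_cubeBump a c univ).continuous.continuousOn)
      |>.integrableOn_compact isCompact_Icc
  have hle (x) (hx : x ∈ cube c (a / 2)) : v x ≤ 2 ^ m * (v x * φ x) := by
    have h2 : (1 : ℝ) ≤ 2 ^ m * φ x :=
      calc (1 : ℝ) = 2 ^ m * (1 / 2) ^ m := by rw [← mul_pow]; norm_num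
        _ ≤ 2 ^ m * φ x := by gcongr; exact half_pow_le_cubeBump c ha (mem_cube.1 hx)
    nlinarith [hpos x (hhalf hx)]
  calc ∫ x in cube c (a / 2), v x ≤ ∫ x in cube c (a / 2), 2 ^ m * (v x * φ x) :=
        setIntegral_mono_on ((hv.continuousOn.mono (hhalf.trans hsub)).integrableOn_compact
          isCompact_Icc) ((hvφ.mono_set hhalf).const_mul _) measurableSet_Icc hle
    _ ≤ 2 ^ m * ∫ x in cube c a, v x * φ x := by
        rw [integral_const_mul]
        refine mul_le_mul_of_nonneg_left (setIntegral_mono_set hvφ ?_ hhalf.eventuallyLE)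
          (by positivity)
        exact ae_restrict_of_forall_mem measurableSet_Icc fun x hx =>
          mul_nonneg (hpos x hx) (cubeBump_nonneg a c univ x)
    _ ≤ 2 ^ m * (2 * c₁ / c₀ * (2 * a) ^ m) := by
        gcongr
        exact setIntegral_mul_cubeBump_le ha hc₀ hc₁ hfreq hU hv hsub hpos hsup

end BoxEstimate

section Euclidean

variable {m : ℕ}

lemma pd_eq_pdPi (i : Fin m) (u : EuclideanSpace ℝ (Fin m) → ℝ) (x : EuclideanSpace ℝ (Fin m)) :
    pd i u x =
      pdPi i (u ∘ (EuclideanSpace.equiv (Fin m) ℝ).symm) (EuclideanSpace.equiv (Fin m) ℝ x) := by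
  set e := EuclideanSpace.equiv (Fin m) ℝ
  have hu : u = (u ∘ e.symm) ∘ e := by ext; simp
  rw [pd, pdPi]
  conv_lhs => rw [hu, e.comp_right_fderiv]
  rfl

lemma lap_eq_lapPi (u : EuclideanSpace ℝ (Fin m) → ℝ) (x : EuclideanSpace ℝ (Fin m)) :
    lap u x =
      lapPi (u ∘ (EuclideanSpace.equiv (Fin m) ℝ).symm) (EuclideanSpace.equiv (Fin m) ℝ x) := by
  refine sum_congr rfl fun i _ => ?_
  rw [pd_eq_pdPi]
  congr 1
  ext y
  simp only [Function.comp, pd_eq_pdPi, ContinuousLinearEquiv.apply_symm_apply]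

theorem setIntegral_ball_half_le {a c₀ c₁ : ℝ} {U : Set (EuclideanSpace ℝ (Fin m))}
    {u : EuclideanSpace ℝ (Fin m) → ℝ} (p : EuclideanSpace ℝ (Fin m)) (ha : 0 < a)
    (hc₀ : 0 < c₀) (hc₁ : 0 ≤ c₁) (hfreq : m * (π / a) ^ 2 ≤ c₀ / 2) (hU : IsOpen U)
    (hu : ContDiffOn ℝ 2 u U) (hsub : closedBall p (a * √m) ⊆ U)
    (hpos : ∀ x ∈ closedBall p (a * √m), 0 ≤ u x)
    (hsup : ∀ x ∈ closedBall p (a * √m), lap u x ≤ c₁ - c₀ * u x) :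
    ∫ x in ball p (a / 2), u x ≤ 2 ^ m * (2 * c₁ / c₀ * (2 * a) ^ m) := by
  set e := EuclideanSpace.equiv (Fin m) ℝ with he
  have hcube (y) (hy : y ∈ cube (e p) a) : e.symm y ∈ closedBall p (a * √m) := by
    simpa using dist_le_mul_sqrt_card (x := e.symm y) (y := p) ha.le (mem_cube.1 hy)
  have hball : ball p (a / 2) ⊆ e ⁻¹' cube (e p) (a / 2) := fun x hx =>
    mem_cube.2 fun i => (PiLp.dist_apply_le x p i).trans (mem_ball.1 hx).le
  have hhalf : e ⁻¹' cube (e p) (a / 2) ⊆ closedBall p (a * √m) := fun x hx => by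
    simpa using hcube (e x) (cube_subset_cube _ (half_le_self ha.le) hx)
  calc ∫ x in ball p (a / 2), u x ≤ ∫ x in e ⁻¹' cube (e p) (a / 2), u x :=
        setIntegral_mono_set (((hu.continuousOn.mono hsub).integrableOn_compact
            (isCompact_closedBall p _)).mono_set hhalf)
          (ae_restrict_of_forall_mem (measurableSet_Icc.preimage e.continuous.measurable)
            fun x hx => hpos x (hhalf hx))
          hball.eventuallyLE
    _ = ∫ y in cube (e p) (a / 2), (u ∘ e.symm) y := by
        convert (PiLp.volume_preserving_ofLp (Fin m)).setIntegral_preimage_emb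
          e.toHomeomorph.measurableEmbedding (u ∘ e.symm) (cube (e p) (a / 2)) using 2 <;> rfl
    _ ≤ 2 ^ m * (2 * c₁ / c₀ * (2 * a) ^ m) :=
        setIntegral_cube_half_le ha hc₀ hc₁ hfreq (hU.preimage e.symm.continuous)
          (hu.comp e.symm.contDiff.contDiffOn fun y hy => hy) (fun y hy => hsub (hcube y hy))
          (fun y hy => hpos _ (hcube y hy)) fun y hy => by
            have := hsup _ (hcube y hy)
            rwa [lap_eq_lapPi, ← he, e.apply_symm_apply] at this

end Euclidean

lemma exists_pos_mul_pi_div_sq_le (n : ℕ) {c : ℝ} (hc : 0 < c) :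
    ∃ a : ℝ, 0 < a ∧ n * (π / a) ^ 2 ≤ c := by
  refine ⟨π * √((n + 1) / c), by positivity, ?_⟩
  rw [div_mul_cancel_left₀ pi_ne_zero, inv_pow, sq_sqrt (by positivity), inv_div,
    ← mul_div_assoc, div_le_iff₀ (by positivity)]
  nlinarith

end SupersolutionL1

open SupersolutionL1 in
/-- Interior `L¹` bound for positive supersolutions of `-Δu = f(u)` when
`f(s) ≥ c₀ s - c₁`: there is `R₀ = R₀(c₀,n) > 0` and `C = C(c₀,c₁,n)` such that
`∫_{B_{R₀}(x₀)} u ≤ C` for every positive `C²` supersolution on `cl B_{2R₀}(x₀)`. -/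
theorem supersolution_L1_bound (n : ℕ) (c₀ c₁ : ℝ) (hc₀ : 0 < c₀) (hc₁ : 0 < c₁) :
    ∃ R₀ : ℝ, 0 < R₀ ∧ ∃ C : ℝ,
      ∀ f : ℝ → ℝ, (∀ s : ℝ, 0 < s → c₀ * s - c₁ ≤ f s) →
      ∀ x₀ : EuclideanSpace ℝ (Fin n), ∀ u : EuclideanSpace ℝ (Fin n) → ℝ,
        -- `u ∈ C²(cl B_{2R₀}(x₀))`
        (∃ U : Set (EuclideanSpace ℝ (Fin n)), IsOpen U ∧ closedBall x₀ (2 * R₀) ⊆ U ∧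
          ContDiffOn ℝ 2 u U) →
        (∀ x ∈ closedBall x₀ (2 * R₀), 0 < u x) →
        (∀ x ∈ closedBall x₀ (2 * R₀), f (u x) ≤ -lap u x) →
        ∫ x in ball x₀ R₀, u x ≤ C := by
  obtain ⟨a, ha, hfreq⟩ := exists_pos_mul_pi_div_sq_le n (half_pos hc₀)
  set R₀ := a * (√n + 1)
  have hsqrt : 0 ≤ √(n : ℝ) := Real.sqrt_nonneg n
  obtain ⟨T, hT, hcover⟩ :=
    exists_finset_translate_cover (E := EuclideanSpace ℝ (Fin n)) R₀ (half_pos ha)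
  refine ⟨R₀, by positivity, T.card * (2 ^ n * (2 * c₁ / c₀ * (2 * a) ^ n)), ?_⟩
  rintro f hf x₀ u ⟨U, hU, hsub, hu⟩ hpos hsup
  have hnear {p r} (hp : p ∈ T) (hr : r ≤ R₀) : closedBall (x₀ + p) r ⊆ closedBall x₀ (2 * R₀) :=
    closedBall_subset_closedBall' <| by rw [dist_self_add_left]; linarith [hT p hp]
  have hlap (x) (hx : x ∈ closedBall x₀ (2 * R₀)) : lap u x ≤ c₁ - c₀ * u x := by
    linarith [hf _ (hpos x hx), hsup x hx]
  refine setIntegral_le_card_mul_of_subset_biUnion T _ (fun _ _ => measurableSet_ball)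
    (ball_subset_closedBall.trans (hcover x₀))
    (iUnion₂_subset fun p hp => ball_subset_closedBall.trans (hnear hp (by nlinarith)))
    (fun x hx => (hpos x hx).le)
    ((hu.continuousOn.mono hsub).integrableOn_compact (isCompact_closedBall x₀ _)) fun p hp => ?_
  have hcube := hnear hp (r := a * √n) (by nlinarith)
  exact setIntegral_ball_half_le _ ha hc₀ hc₁.le hfreq hU hu (hcube.trans hsub)
    (fun x hx => (hpos x (hcube hx)).le) fun x hx => hlap x (hcube hx)
end

section
/- Let f ∈ C¹([0,∞)) ∩ C²((0,∞)) be nonnegative and convex with f(0) = 0, and let u be a positive classical solution of −Δu = f(u) in ℝⁿ₊ with u = 0 on ∂ℝⁿ₊, sufficiently regular (u ∈ W^{3,s}_loc(cl(ℝⁿ₊)) ∩ W^{4,s}_loc(ℝⁿ₊) for all finite s), with v := ∂u/∂x_n > 0 in cl(ℝⁿ₊). Set z := (1 + x_n) v, w := ∂²u/∂x_n², and ξ := w/z. Then ξ satisfies the identity −∇·(z² ∇ξ) = 2 z² ξ² + (1 + x_n) f''(u) v³ in ℝⁿ₊; in particular −∇·(z² ∇ξ) ≥ 2 z² ξ² in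 ℝⁿ₊, and ξ = 0 on ∂ℝⁿ₊. -/
/-!
Differentiating `-Δu = f(u)` in `xₙ` gives `-Δv = f'(u) v` and `-Δw = f'(u) w + f''(u) v²`,
and since `z = (1 + xₙ) v`, also `-Δz = f'(u) z - 2w`. For `ξ = w / z` one has
`z² ∇ξ = z ∇w - w ∇z`, hence `-∇·(z² ∇ξ) = -z Δw + w Δz = z f''(u) v² + 2w²`, which is the
identity; convexity makes `f'' ≥ 0`. On `∂ℝⁿ₊` the tangential second derivatives of `u` vanish
because `u` does, so there `w = Δu`, and `Δu = -f(u) → -f(0) = 0` from inside.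
-/

open MeasureTheory Set Metric

/-- The open upper half-space `ℝⁿ₊` in dimension `n+1`. -/
def upperHalf (n : ℕ) : Set (EuclideanSpace ℝ (Fin (n + 1))) :=
  {x | 0 < x (Fin.last n)}

/-- `v = ∂u/∂xₙ`. -/
noncomputable def vfun (n : ℕ) (u : EuclideanSpace ℝ (Fin (n + 1)) → ℝ) :
    EuclideanSpace ℝ (Fin (n + 1)) → ℝ :=
  pd (Fin.last n) u

/-- `w = ∂²u/∂xₙ²`. -/
noncomputable def wfun (n : ℕ) (u : EuclideanSpace ℝ (Fin (n + 1)) → ℝ) :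
    EuclideanSpace ℝ (Fin (n + 1)) → ℝ :=
  pd (Fin.last n) (vfun n u)

/-- `z = (1 + xₙ) v`. -/
noncomputable def zfun (n : ℕ) (u : EuclideanSpace ℝ (Fin (n + 1)) → ℝ)
    (x : EuclideanSpace ℝ (Fin (n + 1))) : ℝ :=
  (1 + x (Fin.last n)) * vfun n u x

/-- `ξ = w / z`. -/
noncomputable def xifun (n : ℕ) (u : EuclideanSpace ℝ (Fin (n + 1)) → ℝ)
    (x : EuclideanSpace ℝ (Fin (n + 1))) : ℝ :=
  wfun n u x / zfun n u x

open Filter Topology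

section PartialDerivatives

variable {m : ℕ} {i j k : Fin m} {u v g h : EuclideanSpace ℝ (Fin m) → ℝ}
  {x : EuclideanSpace ℝ (Fin m)}

lemma pd_congr (hug : u =ᶠ[𝓝 x] g) : pd i u x = pd i g x := by
  rw [pd, hug.fderiv_eq]; rfl

lemma contDiffAt_pd {k k' : WithTop ℕ∞} (hk : k + 1 ≤ k') (hu : ContDiffAt ℝ k' u x) :
    ContDiffAt ℝ k (pd i u) x :=
  (hu.fderiv_right hk).clm_apply contDiffAt_const

lemma differentiableAt_pd {k : WithTop ℕ∞} (hk : 2 ≤ k) (hu : ContDiffAt ℝ k u x) :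
    DifferentiableAt ℝ (pd i u) x :=
  (contDiffAt_pd (k := 1) hk hu).differentiableAt one_ne_zero

lemma pd_neg : pd i (fun y => -g y) x = -pd i g x := by
  rw [pd, fderiv_fun_neg]; rfl

lemma pd_add (hg : DifferentiableAt ℝ g x) (hh : DifferentiableAt ℝ h x) :
    pd i (fun y => g y + h y) x = pd i g x + pd i h x := by
  rw [pd, fderiv_fun_add hg hh]; rfl

lemma pd_sub (hg : DifferentiableAt ℝ g x) (hh : DifferentiableAt ℝ h x) :
    pd i (fun y => g y - h y) x = pd i g x - pd i h x := by
  rw [pd, fderiv_fun_sub hg hh]; rfl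

lemma pd_mul (hg : DifferentiableAt ℝ g x) (hh : DifferentiableAt ℝ h x) :
    pd i (fun y => g y * h y) x = pd i g x * h x + g x * pd i h x := by
  rw [pd, fderiv_fun_mul hg hh]; simp [pd]; ring

lemma pd_comp {φ : ℝ → ℝ} {φ' : ℝ} (hφ : HasDerivAt φ φ' (g x)) (hg : DifferentiableAt ℝ g x) :
    pd i (fun y => φ (g y)) x = φ' * pd i g x := by
  change fderiv ℝ (φ ∘ g) x _ = _
  rw [(hφ.comp_hasFDerivAt x hg.hasFDerivAt).fderiv]; simp [pd]

lemma pd_div (hg : DifferentiableAt ℝ g x) (hh : DifferentiableAt ℝ h x) (hx : h x ≠ 0) :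
    pd i (fun y => g y / h y) x = (pd i g x * h x - g x * pd i h x) / h x ^ 2 := by
  simp only [div_eq_mul_inv]
  rw [pd_mul (h := fun y => (h y)⁻¹) hg (hh.inv hx), pd_comp (hasDerivAt_inv hx) hh]
  field_simp
  ring

lemma pd_sum {ι : Type*} (s : Finset ι) (g : ι → EuclideanSpace ℝ (Fin m) → ℝ)
    (hg : ∀ l ∈ s, DifferentiableAt ℝ (g l) x) :
    pd i (fun y => ∑ l ∈ s, g l y) x = ∑ l ∈ s, pd i (g l) x := by
  rw [pd, fderiv_fun_sum hg]; simp [pd]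

lemma pd_const_add_coord (c : ℝ) :
    pd i (fun y : EuclideanSpace ℝ (Fin m) => c + y k) x = if i = k then 1 else 0 := by
  rw [pd, fderiv_const_add, show (fun y : EuclideanSpace ℝ (Fin m) => y k) =
    EuclideanSpace.proj (𝕜 := ℝ) k from rfl, ContinuousLinearMap.fderiv]
  simp [eq_comm]

lemma pd_pd_eq_fderiv_fderiv (hu : ContDiffAt ℝ 2 u x) :
    pd i (pd j u) x =
      fderiv ℝ (fderiv ℝ u) x (EuclideanSpace.single i 1) (EuclideanSpace.single j 1) := by
  have hd : DifferentiableAt ℝ (fderiv ℝ u) x :=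
    (hu.fderiv_right (m := 1) le_rfl).differentiableAt (by norm_num)
  change fderiv ℝ (fun y => fderiv ℝ u y (EuclideanSpace.single j 1)) x _ = _
  rw [fderiv_clm_apply hd (differentiableAt_const _)]
  simp

lemma pd_comm (hu : ContDiffAt ℝ 2 u x) : pd i (pd j u) x = pd j (pd i u) x := by
  rw [pd_pd_eq_fderiv_fderiv hu, pd_pd_eq_fderiv_fderiv hu]
  exact (hu.isSymmSndFDerivAt (by simp)).eq _ _

lemma continuousAt_lap (hu : ContDiffAt ℝ 2 u x) : ContinuousAt (lap u) x :=
  tendsto_finsetSum _ fun _ _ =>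
    (contDiffAt_pd (k := 0) le_rfl (contDiffAt_pd (k := 1) le_rfl hu)).continuousAt

lemma lap_pd (hu : ContDiffAt ℝ 3 u x) : lap (pd j u) x = pd j (lap u) x := by
  have hcomm : ∀ i, pd i (pd i (pd j u)) x = pd j (pd i (pd i u)) x := fun i => by
    have hnear : pd i (pd j u) =ᶠ[𝓝 x] pd j (pd i u) :=
      (hu.eventually (by simp)).mono fun y hy => pd_comm (hy.of_le (by norm_num))
    rw [pd_congr hnear, pd_comm (contDiffAt_pd (k := 2) le_rfl hu)]
  unfold lap
  rw [pd_sum _ _ fun i _ => differentiableAt_pd le_rfl (contDiffAt_pd (k := 2) le_rfl hu)]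
  exact Finset.sum_congr rfl fun i _ => hcomm i

lemma lap_mul (hg : ContDiffAt ℝ 2 g x) (hh : ContDiffAt ℝ 2 h x) :
    lap (fun y => g y * h y) x =
      g x * lap h x + 2 * ∑ i, pd i g x * pd i h x + lap g x * h x := by
  have hdiff : ∀ f : EuclideanSpace ℝ (Fin m) → ℝ, ContDiffAt ℝ 2 f x →
      ∀ᶠ y in 𝓝 x, DifferentiableAt ℝ f y := fun f hf =>
    (hf.eventually (by simp)).mono fun y hy => hy.differentiableAt (by norm_num)
  have hterm : ∀ i, pd i (pd i fun y => g y * h y) x =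
      pd i (pd i g) x * h x + 2 * (pd i g x * pd i h x) + g x * pd i (pd i h) x := fun i => by
    have hnear : pd i (fun y => g y * h y) =ᶠ[𝓝 x] fun y => pd i g y * h y + g y * pd i h y :=
      ((hdiff g hg).and (hdiff h hh)).mono fun y hy => pd_mul hy.1 hy.2
    have hg' := hg.differentiableAt (n := 2) (by norm_num)
    have hh' := hh.differentiableAt (n := 2) (by norm_num)
    have hgi := differentiableAt_pd (i := i) le_rfl hg
    have hhi := differentiableAt_pd (i := i) le_rfl hh
    rw [pd_congr hnear, pd_add (g := fun y => pd i g y * h y) (h := fun y => g y * pd i h y)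
      (hgi.mul hh') (hg'.mul hhi), pd_mul hgi hh', pd_mul hg' hhi]
    ring
  simp only [lap, hterm, Finset.sum_add_distrib, Finset.mul_sum, Finset.sum_mul]
  ring

lemma lap_const_add_coord_mul (c : ℝ) (hv : ContDiffAt ℝ 2 v x) :
    lap (fun y => (c + y k) * v y) x = 2 * pd k v x + (c + x k) * lap v x := by
  have hcoord : ContDiff ℝ 2 fun y : EuclideanSpace ℝ (Fin m) => c + y k :=
    contDiff_const.add (EuclideanSpace.proj (𝕜 := ℝ) k).contDiff
  have hlap : lap (fun y : EuclideanSpace ℝ (Fin m) => c + y k) x = 0 := by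
    simp only [lap, pd_const_add_coord]
    simp [pd]
  rw [lap_mul hcoord.contDiffAt hv, hlap]
  simp [pd_const_add_coord]
  ring

lemma sum_pd_sq_mul_pd_div (hg : ContDiffAt ℝ 2 g x) (hh : ContDiffAt ℝ 2 h x) (hx : h x ≠ 0) :
    ∑ i, pd i (fun y => h y ^ 2 * pd i (fun y => g y / h y) y) x =
      h x * lap g x - g x * lap h x := by
  have hnear : ∀ i, (fun y => h y ^ 2 * pd i (fun y => g y / h y) y) =ᶠ[𝓝 x]
      fun y => h y * pd i g y - g y * pd i h y := fun i => by
    filter_upwards [hg.eventually (by simp), hh.eventually (by simp),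
      hh.continuousAt.eventually_ne hx] with y hgy hhy hy
    rw [pd_div (hgy.differentiableAt (by norm_num)) (hhy.differentiableAt (by norm_num)) hy]
    field_simp
  have hg' := hg.differentiableAt (n := 2) (by norm_num)
  have hh' := hh.differentiableAt (n := 2) (by norm_num)
  have hterm : ∀ i, pd i (fun y => h y * pd i g y - g y * pd i h y) x =
      h x * pd i (pd i g) x - g x * pd i (pd i h) x := fun i => by
    have hgi := differentiableAt_pd (i := i) le_rfl hg
    have hhi := differentiableAt_pd (i := i) le_rfl hh
    rw [pd_sub (g := fun y => h y * pd i g y) (h := fun y => g y * pd i h y)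
      (hh'.mul hgi) (hg'.mul hhi), pd_mul hh' hgi, pd_mul hg' hhi]
    ring
  simp only [fun i => pd_congr (i := i) (hnear i), hterm, Finset.sum_sub_distrib, lap,
    Finset.mul_sum]

lemma pd_eq_zero_of_eqOn_hyperplane (hg : DifferentiableAt ℝ g x) (hx : x k = 0)
    (hzero : ∀ y : EuclideanSpace ℝ (Fin m), y k = 0 → g y = 0) (hik : i ≠ k) : pd i g x = 0 := by
  have hline : HasDerivAt (fun t : ℝ => x + t • EuclideanSpace.single i 1)
      (EuclideanSpace.single i 1) 0 := by
    simpa using ((hasDerivAt_id (0 : ℝ)).smul_const (EuclideanSpace.single i (1 : ℝ))).const_add x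
  have hgx : HasFDerivAt g (fderiv ℝ g x) (x + (0 : ℝ) • EuclideanSpace.single i 1) := by
    simpa using hg.hasFDerivAt
  have hcomp := hgx.comp_hasDerivAt (0 : ℝ) hline
  have hconst : (g ∘ fun t : ℝ => x + t • EuclideanSpace.single i 1) = fun _ => 0 := by
    funext t
    exact hzero _ (by simp [hx, hik])
  rw [hconst] at hcomp
  exact hcomp.unique (hasDerivAt_const 0 0)

lemma lap_eq_pd_pd_of_eqOn_hyperplane (hu : ∀ y : EuclideanSpace ℝ (Fin m), y k = 0 →
      ContDiffAt ℝ 2 u y)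
    (hzero : ∀ y : EuclideanSpace ℝ (Fin m), y k = 0 → u y = 0) (hx : x k = 0) :
    lap u x = pd k (pd k u) x := by
  refine Finset.sum_eq_single k (fun i _ hik => ?_) (by simp)
  refine pd_eq_zero_of_eqOn_hyperplane (differentiableAt_pd le_rfl (hu x hx)) hx
    (fun y hy => ?_) hik
  exact pd_eq_zero_of_eqOn_hyperplane ((hu y hy).differentiableAt (by norm_num)) hy hzero hik

end PartialDerivatives

lemma eq_zero_of_eq_comp_of_mem_closure {X : Type*} [TopologicalSpace X] {S : Set X} {x : X}
    {L u : X → ℝ} {f : ℝ → ℝ} (hx : x ∈ closure S) (hL : ContinuousAt L x)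
    (hu : ContinuousAt u x) (hux : u x = 0) (hnonneg : ∀ y ∈ S, 0 ≤ u y)
    (hf : ContinuousWithinAt f (Ici 0) 0) (hf0 : f 0 = 0) (heq : ∀ y ∈ S, L y = f (u y)) :
    L x = 0 := by
  have := mem_closure_iff_nhdsWithin_neBot.1 hx
  have hu0 : Tendsto u (𝓝[S] x) (𝓝[Ici 0] 0) :=
    tendsto_nhdsWithin_iff.2 ⟨hux ▸ hu.tendsto.mono_left nhdsWithin_le_nhds,
      eventually_nhdsWithin_of_forall hnonneg⟩
  have hfu : Tendsto L (𝓝[S] x) (𝓝 0) :=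
    (hf0 ▸ hf.tendsto.comp hu0).congr'
      (eventually_nhdsWithin_of_forall fun y hy => (heq y hy).symm)
  exact tendsto_nhds_unique (hL.tendsto.mono_left nhdsWithin_le_nhds) hfu

lemma ConvexOn.nonneg_of_hasDerivAt_of_hasDerivAt {D : Set ℝ} {f f' : ℝ → ℝ} {f'' s : ℝ}
    (hD : IsOpen D) (hconv : ConvexOn ℝ D f) (hf : ∀ y ∈ D, HasDerivAt f (f' y) y)
    (hf' : HasDerivAt f' f'' s) (hs : s ∈ D) : 0 ≤ f'' := by
  have hmono : MonotoneOn f' D := fun a ha b hb hab => by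
    rw [← (hf a ha).deriv, ← (hf b hb).deriv]
    exact hconv.monotoneOn_deriv (fun y hy => (hf y hy).differentiableAt) ha hb hab
  rw [← hf'.hasDerivWithinAt.derivWithin (hD.uniqueDiffOn s hs)]
  exact hmono.derivWithin_nonneg

section SemilinearEquation

variable {m : ℕ} {k : Fin m} {u : EuclideanSpace ℝ (Fin m) → ℝ} {x : EuclideanSpace ℝ (Fin m)}
  {F F' : ℝ → ℝ}

lemma lap_pd_of_neg_lap_eq_comp (hu : ContDiffAt ℝ 3 u x) (hF : HasDerivAt F (F' (u x)) (u x))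
    (heq : ∀ᶠ y in 𝓝 x, -lap u y = F (u y)) : lap (pd k u) x = -(F' (u x) * pd k u x) := by
  have hnear : lap u =ᶠ[𝓝 x] fun y => -F (u y) := heq.mono fun y hy => neg_eq_iff_eq_neg.1 hy
  rw [lap_pd hu, pd_congr hnear, pd_neg, pd_comp hF (hu.differentiableAt (by norm_num))]

lemma lap_pd_pd_of_lap_pd_eq {F'' : ℝ} (hu : ContDiffAt ℝ 4 u x) (hF' : HasDerivAt F' F'' (u x))
    (heq : ∀ᶠ y in 𝓝 x, lap (pd k u) y = -(F' (u y) * pd k u y)) :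
    lap (pd k (pd k u)) x = -(F'' * pd k u x ^ 2 + F' (u x) * pd k (pd k u) x) := by
  have hu' := hu.differentiableAt (n := 4) (by norm_num)
  rw [lap_pd (contDiffAt_pd (k := 3) le_rfl hu), pd_congr heq, pd_neg,
    pd_mul (g := fun y => F' (u y)) (hF'.differentiableAt.comp x hu')
      (differentiableAt_pd (by norm_num) hu), pd_comp hF' hu']
  ring

end SemilinearEquation

section HalfSpace

variable {n : ℕ} {u : EuclideanSpace ℝ (Fin (n + 1)) → ℝ} {x : EuclideanSpace ℝ (Fin (n + 1))}

lemma isOpen_upperHalf (n : ℕ) : IsOpen (upperHalf n) :=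
  isOpen_lt continuous_const (EuclideanSpace.proj (𝕜 := ℝ) (Fin.last n)).continuous

lemma mem_closure_upperHalf (hx : x (Fin.last n) = 0) : x ∈ closure (upperHalf n) := by
  have hline : Tendsto (fun t : ℝ => x + t • EuclideanSpace.single (Fin.last n) 1) (𝓝[>] 0)
      (𝓝 x) :=
    ((continuous_const.add (continuous_id.smul continuous_const)).tendsto' 0 x
      (by simp)).mono_left nhdsWithin_le_nhds
  exact mem_closure_of_tendsto hline
    (eventually_nhdsWithin_of_forall fun t ht => by simpa [upperHalf, hx] using ht)

lemma neg_div_zfun_sq_grad_xifun_eq {F' : ℝ → ℝ} {F'' : ℝ} (hu : ContDiffAt ℝ 4 u x)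
    (hz : zfun n u x ≠ 0) (hlapv : lap (vfun n u) x = -(F' (u x) * vfun n u x))
    (hlapw : lap (wfun n u) x = -(F'' * vfun n u x ^ 2 + F' (u x) * wfun n u x)) :
    -(∑ i, pd i (fun y => zfun n u y ^ 2 * pd i (fun y' => xifun n u y') y) x) =
      2 * zfun n u x ^ 2 * xifun n u x ^ 2 + (1 + x (Fin.last n)) * F'' * vfun n u x ^ 3 := by
  have hv : ContDiffAt ℝ 3 (vfun n u) x := contDiffAt_pd le_rfl hu
  have hz2 : ContDiffAt ℝ 2 (zfun n u) x :=
    (contDiff_const.add (EuclideanSpace.proj (𝕜 := ℝ) (Fin.last n)).contDiff).contDiffAt.mul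
      (hv.of_le (by norm_num))
  have hdiv : ∑ i, pd i (fun y => zfun n u y ^ 2 * pd i (fun y' => xifun n u y') y) x =
      zfun n u x * lap (wfun n u) x - wfun n u x * lap (zfun n u) x :=
    sum_pd_sq_mul_pd_div (contDiffAt_pd le_rfl hv) hz2 hz
  have hlapz : lap (zfun n u) x = 2 * wfun n u x + (1 + x (Fin.last n)) * lap (vfun n u) x :=
    lap_const_add_coord_mul 1 (hv.of_le (by norm_num))
  rw [hdiv, hlapw, hlapz, hlapv, xifun]
  field_simp
  rw [zfun]
  ring

lemma xifun_eq_zero_of_boundary {f : ℝ → ℝ} (hf : ContinuousWithinAt f (Ici 0) 0) (hf0 : f 0 = 0)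
    (hu : ∀ y : EuclideanSpace ℝ (Fin (n + 1)), y (Fin.last n) = 0 → ContDiffAt ℝ 2 u y)
    (hpos : ∀ y ∈ upperHalf n, 0 < u y) (heq : ∀ y ∈ upperHalf n, -lap u y = f (u y))
    (hbdry : ∀ y : EuclideanSpace ℝ (Fin (n + 1)), y (Fin.last n) = 0 → u y = 0)
    (hx : x (Fin.last n) = 0) : xifun n u x = 0 := by
  have hlap : -lap u x = 0 := eq_zero_of_eq_comp_of_mem_closure (L := fun y => -lap u y)
    (mem_closure_upperHalf hx) (continuousAt_lap (hu x hx)).neg (hu x hx).continuousAt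
    (hbdry x hx) (fun y hy => (hpos y hy).le) hf hf0 heq
  rw [xifun, wfun, vfun, ← lap_eq_pd_pd_of_eqOn_hyperplane hu hbdry hx, neg_eq_zero.1 hlap,
    zero_div]

end HalfSpace

theorem auxiliary_identity_for_xi_general (n : ℕ) (f f' f'' : ℝ → ℝ)
    (hf' : ∀ s ∈ Ici (0 : ℝ), HasDerivWithinAt f (f' s) (Ici 0) s)
    (hf'' : ∀ s ∈ Ioi (0 : ℝ), HasDerivAt f' (f'' s) s)
    (hfconv : ConvexOn ℝ (Ici 0) f)
    (hf0 : f 0 = 0)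
    (u : EuclideanSpace ℝ (Fin (n + 1)) → ℝ)
    -- sufficient regularity of `u`
    (hreg : ContDiffOn ℝ 4 u (upperHalf n))
    (hregbd : ∃ U : Set (EuclideanSpace ℝ (Fin (n + 1))), IsOpen U ∧
      {x : EuclideanSpace ℝ (Fin (n + 1)) | 0 ≤ x (Fin.last n)} ⊆ U ∧ ContDiffOn ℝ 2 u U)
    (hpos : ∀ x ∈ upperHalf n, 0 < u x)
    (heq : ∀ x ∈ upperHalf n, -lap u x = f (u x))
    (hbdry : ∀ x : EuclideanSpace ℝ (Fin (n + 1)), x (Fin.last n) = 0 → u x = 0)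
    (hv : ∀ x : EuclideanSpace ℝ (Fin (n + 1)), 0 ≤ x (Fin.last n) → 0 < vfun n u x) :
    (∀ x ∈ upperHalf n,
      -(∑ i, pd i (fun y => zfun n u y ^ 2 * pd i (fun y' => xifun n u y') y) x) =
        2 * zfun n u x ^ 2 * xifun n u x ^ 2 +
          (1 + x (Fin.last n)) * f'' (u x) * vfun n u x ^ 3) ∧
    (∀ x ∈ upperHalf n,
      2 * zfun n u x ^ 2 * xifun n u x ^ 2 ≤
        -(∑ i, pd i (fun y => zfun n u y ^ 2 * pd i (fun y' => xifun n u y') y) x)) ∧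
    (∀ x : EuclideanSpace ℝ (Fin (n + 1)), x (Fin.last n) = 0 → xifun n u x = 0) := by
  have hnhds : ∀ x ∈ upperHalf n, upperHalf n ∈ 𝓝 x := fun _ hx =>
    (isOpen_upperHalf n).mem_nhds hx
  have hu : ∀ x ∈ upperHalf n, ContDiffAt ℝ 4 u x := fun x hx => hreg.contDiffAt (hnhds x hx)
  have hf_deriv : ∀ s ∈ Ioi (0 : ℝ), HasDerivAt f (f' s) s := fun s hs =>
    (hf' s (mem_Ici.2 hs.out.le)).hasDerivAt (Ici_mem_nhds hs)
  have hlapv := fun x (hx : x ∈ upperHalf n) => lap_pd_of_neg_lap_eq_comp (k := Fin.last n)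
    ((hu x hx).of_le (by norm_num)) (hf_deriv _ (hpos x hx)) (eventually_of_mem (hnhds x hx) heq)
  have hlapw := fun x (hx : x ∈ upperHalf n) =>
    lap_pd_pd_of_lap_pd_eq (hu x hx) (hf'' _ (hpos x hx)) (eventually_of_mem (hnhds x hx) hlapv)
  have hidentity := fun x (hx : x ∈ upperHalf n) => neg_div_zfun_sq_grad_xifun_eq (hu x hx)
    (mul_pos (by linarith [hx.out]) (hv x hx.out.le)).ne' (hlapv x hx) (hlapw x hx)
  refine ⟨hidentity, fun x hx => ?_, fun x hx => ?_⟩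
  · have hf''_nonneg : 0 ≤ f'' (u x) :=
      (hfconv.subset Ioi_subset_Ici_self (convex_Ioi 0)).nonneg_of_hasDerivAt_of_hasDerivAt
        isOpen_Ioi hf_deriv (hf'' _ (hpos x hx)) (hpos x hx)
    have ht : 0 ≤ 1 + x (Fin.last n) := by linarith [hx.out]
    rw [hidentity x hx]
    exact le_add_of_nonneg_right
      (mul_nonneg (mul_nonneg ht hf''_nonneg) (pow_nonneg (hv x hx.out.le).le 3))
  · obtain ⟨U, hU, hHU, hU2⟩ := hregbd
    exact xifun_eq_zero_of_boundary (hf' 0 self_mem_Ici).continuousWithinAt hf0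
      (fun y hy => hU2.contDiffAt (hU.mem_nhds (hHU hy.ge))) hpos heq hbdry hx

/-- The auxiliary quotient `ξ = u_{xₙxₙ}/((1+xₙ)u_{xₙ})` of a positive monotone solution of
`-Δu = f(u)` in `ℝⁿ₊` with convex `f`, `f(0) = 0`, satisfies
`-∇·(z²∇ξ) = 2z²ξ² + (1+xₙ)f''(u)v³ ≥ 2z²ξ²` in `ℝⁿ₊` and `ξ = 0` on `∂ℝⁿ₊`. -/
theorem auxiliary_identity_for_xi (n : ℕ) (f f' f'' : ℝ → ℝ)
    (hf' : ∀ s ∈ Ici (0 : ℝ), HasDerivWithinAt f (f' s) (Ici 0) s)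
    (hf'cont : ContinuousOn f' (Ici 0))
    (hf'' : ∀ s ∈ Ioi (0 : ℝ), HasDerivAt f' (f'' s) s)
    (hf''cont : ContinuousOn f'' (Ioi 0))
    (hfnonneg : ∀ s ∈ Ici (0 : ℝ), 0 ≤ f s)
    (hfconv : ConvexOn ℝ (Ici 0) f)
    (hf0 : f 0 = 0)
    (u : EuclideanSpace ℝ (Fin (n + 1)) → ℝ)
    -- sufficient regularity of `u`
    (hreg : ContDiffOn ℝ 4 u (upperHalf n))
    (hregbd : ∃ U : Set (EuclideanSpace ℝ (Fin (n + 1))), IsOpen U ∧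
      {x : EuclideanSpace ℝ (Fin (n + 1)) | 0 ≤ x (Fin.last n)} ⊆ U ∧ ContDiffOn ℝ 2 u U)
    (hpos : ∀ x ∈ upperHalf n, 0 < u x)
    (heq : ∀ x ∈ upperHalf n, -lap u x = f (u x))
    (hbdry : ∀ x : EuclideanSpace ℝ (Fin (n + 1)), x (Fin.last n) = 0 → u x = 0)
    (hv : ∀ x : EuclideanSpace ℝ (Fin (n + 1)), 0 ≤ x (Fin.last n) → 0 < vfun n u x) :
    (∀ x ∈ upperHalf n,
      -(∑ i, pd i (fun y => zfun n u y ^ 2 * pd i (fun y' => xifun n u y') y) x) =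
        2 * zfun n u x ^ 2 * xifun n u x ^ 2 +
          (1 + x (Fin.last n)) * f'' (u x) * vfun n u x ^ 3) ∧
    (∀ x ∈ upperHalf n,
      2 * zfun n u x ^ 2 * xifun n u x ^ 2 ≤
        -(∑ i, pd i (fun y => zfun n u y ^ 2 * pd i (fun y' => xifun n u y') y) x)) ∧
    (∀ x : EuclideanSpace ℝ (Fin (n + 1)), x (Fin.last n) = 0 → xifun n u x = 0) :=
  auxiliary_identity_for_xi_general n f f' f'' hf' hf'' hfconv hf0 u hreg hregbd hpos heq hbdry hv
end

section
/- Let f : [0,∞) → (0,∞) be continuous with ∫₀^∞ f(s) ds = ∞. Then there is no positive function u ∈ C²([0,∞)) satisfying −u'' = f(u) on (0,∞) and u(0) = 0. -/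
open Set MeasureTheory

/-!
Since `u'' = -f(u) < 0`, the derivative `u'` is strictly decreasing; if it ever became
nonpositive it would afterwards stay below a negative constant and drive `u` below zero, so
`u' > 0`. The solution is then unbounded: on a bounded range `f(u)` would be bounded below by
a positive constant and `u'` would eventually turn negative. Finally the energy
`u'^2 + 2 F(u)`, with `F(t) = ∫₀ᵗ f`, is conserved, so `F` is bounded on the unbounded range
of `u`, hence on `[0, ∞)`, and the positive function `f` is integrable on `(0, ∞)`.
-/

lemma exists_neg_of_hasDerivAt_le_neg {g g' : ℝ → ℝ} {a M : ℝ}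
    (hg : ∀ x ∈ Ici a, HasDerivAt g (g' x) x) (hg' : ∀ x ∈ Ici a, g' x ≤ M) (hM : M < 0) :
    ∃ x ≥ a, g x < 0 := by
  have hbound : ∀ x ∈ Ici a, g x - g a ≤ M * (x - a) := fun x hx =>
    (convex_Ici a).image_sub_le_mul_sub_of_deriv_le
      (fun y hy => (hg y hy).continuousAt.continuousWithinAt)
      (fun y hy => (hg y (interior_subset hy)).differentiableAt.differentiableWithinAt)
      (fun y hy => (hg y (interior_subset hy)).deriv ▸ hg' y (interior_subset hy))
      a self_mem_Ici x hx hx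
  set d := (|g a| + 1) / -M
  have hd : 0 ≤ d := div_nonneg (by positivity) (by linarith)
  have hMd : M * d = -(|g a| + 1) := by
    rw [mul_div_assoc', div_eq_iff (by linarith)]
    ring
  refine ⟨a + d, by linarith, ?_⟩
  have := hbound (a + d) (by simp [hd])
  rw [add_sub_cancel_left, hMd] at this
  linarith [le_abs_self (g a)]

lemma deriv_pos_of_pos_of_hasDerivAt_neg {u u' u'' : ℝ → ℝ} {a : ℝ}
    (hu : ∀ x ∈ Ioi a, HasDerivAt u (u' x) x) (hu' : ∀ x ∈ Ioi a, HasDerivAt u' (u'' x) x)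
    (hu''neg : ∀ x ∈ Ioi a, u'' x < 0) (hpos : ∀ x ∈ Ioi a, 0 < u x) :
    ∀ x ∈ Ioi a, 0 < u' x := by
  have hanti : StrictAntiOn u' (Ioi a) := by
    refine strictAntiOn_of_deriv_neg (convex_Ioi a)
      (fun x hx => (hu' x hx).continuousAt.continuousWithinAt) fun x hx => ?_
    rw [interior_Ioi] at hx
    exact (hu' x hx).deriv ▸ hu''neg x hx
  intro x₀ hx₀
  by_contra! h
  have hx₁ : x₀ + 1 ∈ Ioi a := mem_Ioi.2 (by linarith [mem_Ioi.1 hx₀])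
  have hmem : ∀ x ∈ Ici (x₀ + 1), x ∈ Ioi a := fun x hx => mem_Ioi.2 (lt_of_lt_of_le hx₁ hx)
  obtain ⟨x, hx, hneg⟩ := exists_neg_of_hasDerivAt_le_neg (fun x hx => hu x (hmem x hx))
    (fun x hx => hanti.antitoneOn hx₁ (hmem x hx) hx)
    ((hanti hx₀ hx₁ (by linarith)).trans_le h)
  exact (hpos x (hmem x hx)).not_gt hneg

lemma not_bddAbove_image_of_deriv_eq_neg_comp {f u u' : ℝ → ℝ} {a : ℝ}
    (hf : ContinuousOn f (Ici 0)) (hfpos : ∀ s ∈ Ici (0 : ℝ), 0 < f s)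
    (hu' : ∀ x ∈ Ioi a, HasDerivAt u' (-f (u x)) x)
    (hupos : ∀ x ∈ Ioi a, 0 < u x) (hu'pos : ∀ x ∈ Ioi a, 0 < u' x) :
    ¬ BddAbove (u '' Ioi a) := by
  rintro ⟨B, hB⟩
  have hmem : ∀ x ∈ Ici (a + 1), x ∈ Ioi a := fun x hx =>
    mem_Ioi.2 (by linarith [mem_Ici.1 hx])
  have hrange : ∀ x ∈ Ioi a, u x ∈ Icc 0 B := fun x hx =>
    ⟨(hupos x hx).le, hB (mem_image_of_mem u hx)⟩
  obtain ⟨t₀, ht₀, hmin⟩ := isCompact_Icc.exists_isMinOn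
    ⟨u (a + 1), hrange _ (hmem _ self_mem_Ici)⟩ (hf.mono Icc_subset_Ici_self)
  obtain ⟨x, hx, hneg⟩ := exists_neg_of_hasDerivAt_le_neg (M := -f t₀)
    (fun x hx => hu' x (hmem x hx))
    (fun x hx => neg_le_neg (hmin (hrange x (hmem x hx))))
    (neg_neg_of_pos (hfpos t₀ ht₀.1))
  exact (hu'pos x (hmem x hx)).not_gt hneg

lemma energy_eq_of_hasDerivAt {f u u' F : ℝ → ℝ} {s : Set ℝ} (hs : IsOpen s)
    (hs' : IsPreconnected s) (hu : ∀ x ∈ s, HasDerivAt u (u' x) x)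
    (hu' : ∀ x ∈ s, HasDerivAt u' (-f (u x)) x) (hF : ∀ x ∈ s, HasDerivAt F (f (u x)) (u x))
    {x y : ℝ} (hx : x ∈ s) (hy : y ∈ s) :
    u' x ^ 2 + 2 * F (u x) = u' y ^ 2 + 2 * F (u y) := by
  have hE : ∀ x ∈ s, HasDerivAt (fun x => u' x ^ 2 + 2 * F (u x)) 0 x := fun x hx =>
    (((hu' x hx).pow 2).add (((hF x hx).comp x (hu x hx)).const_mul 2)).congr_deriv
      (by ring)
  exact hs.is_const_of_deriv_eq_zero hs'
    (fun x hx => (hE x hx).differentiableAt.differentiableWithinAt)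
    (fun x hx => (hE x hx).deriv) hx hy

lemma hasDerivAt_and_hasDerivAt_deriv_of_contDiffOn_two {u : ℝ → ℝ} {s : Set ℝ}
    (hu : ContDiffOn ℝ 2 u s) (hs : IsOpen s) {x : ℝ} (hx : x ∈ s) :
    HasDerivAt u (deriv u x) x ∧ HasDerivAt (deriv u) (deriv (deriv u) x) x :=
  ⟨((hu.differentiableOn two_ne_zero).differentiableAt (hs.mem_nhds hx)).hasDerivAt,
    (((hu.deriv_of_isOpen hs (m := 1) (by norm_num)).differentiableOn
      one_ne_zero).differentiableAt (hs.mem_nhds hx)).hasDerivAt⟩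

lemma hasDerivAt_integral_of_continuousOn_Ici {f : ℝ → ℝ} {a t : ℝ}
    (hf : ContinuousOn f (Ici a)) (ht : a < t) :
    HasDerivAt (fun t => ∫ s in a..t, f s) (f t) t :=
  intervalIntegral.integral_hasDerivAt_right
    ((hf.mono Icc_subset_Ici_self).intervalIntegrable_of_Icc ht.le)
    ((hf.mono Ioi_subset_Ici_self).stronglyMeasurableAtFilter isOpen_Ioi t ht)
    (hf.continuousAt (Ici_mem_nhds ht))

lemma integrableOn_Ioi_of_nonneg_of_integral_le {f : ℝ → ℝ} {a C : ℝ}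
    (hf : ContinuousOn f (Ici a)) (hnn : ∀ x ∈ Ici a, 0 ≤ f x)
    (hC : ∀ t ≥ a, ∫ x in a..t, f x ≤ C) : IntegrableOn f (Ioi a) := by
  refine integrableOn_Ioi_of_intervalIntegral_norm_bounded C a (b := fun t => t)
    (l := Filter.atTop)
    (fun t => ((hf.mono Icc_subset_Ici_self).integrableOn_Icc).mono_set Ioc_subset_Icc_self)
    Filter.tendsto_id ?_
  filter_upwards [Filter.eventually_ge_atTop a] with t ht
  rw [intervalIntegral.integral_congr fun x hx =>
    Real.norm_of_nonneg (hnn x (by rw [uIcc_of_le ht] at hx; exact hx.1))]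
  exact hC t ht

/-- If `f : [0,∞) → (0,∞)` is continuous with `∫_0^∞ f(s) ds = ∞`, then there is no
positive `u ∈ C²([0,∞))` with `-u'' = f(u)` on `(0,∞)` and `u(0) = 0`. -/
theorem no_solution_ODE_of_nonintegrable (f : ℝ → ℝ)
    (hfcont : ContinuousOn f (Ici 0))
    (hfpos : ∀ s ∈ Ici (0 : ℝ), 0 < f s)
    (hfint : ¬ IntegrableOn f (Ioi 0)) :
    ¬ ∃ u : ℝ → ℝ,
      ContDiffOn ℝ 2 u (Ici 0) ∧
      u 0 = 0 ∧
      (∀ x : ℝ, 0 < x → 0 < u x) ∧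
      (∀ x : ℝ, 0 < x → -(deriv (deriv u) x) = f (u x)) := by
  rintro ⟨u, hu, -, hupos, hode⟩
  have hC2 : ContDiffOn ℝ 2 u (Ioi 0) := hu.mono Ioi_subset_Ici_self
  have hu' : ∀ x ∈ Ioi (0 : ℝ), HasDerivAt u (deriv u x) x := fun x hx =>
    (hasDerivAt_and_hasDerivAt_deriv_of_contDiffOn_two hC2 isOpen_Ioi hx).1
  have hu'' : ∀ x ∈ Ioi (0 : ℝ), HasDerivAt (deriv u) (-f (u x)) x := fun x hx => by
    rw [← hode x hx, neg_neg]
    exact (hasDerivAt_and_hasDerivAt_deriv_of_contDiffOn_two hC2 isOpen_Ioi hx).2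
  have hu'pos := deriv_pos_of_pos_of_hasDerivAt_neg hu' hu''
    (fun x hx => neg_lt_zero.2 (hfpos _ (hupos x hx).le)) hupos
  have hunbdd := not_bddAbove_image_of_deriv_eq_neg_comp hfcont hfpos hu'' hupos hu'pos
  set F : ℝ → ℝ := fun t => ∫ s in (0 : ℝ)..t, f s
  have hF : ∀ x ∈ Ioi (0 : ℝ), HasDerivAt F (f (u x)) (u x) := fun x hx =>
    hasDerivAt_integral_of_continuousOn_Ici hfcont (hupos x hx)
  refine hfint (integrableOn_Ioi_of_nonneg_of_integral_le hfcont (fun s hs => (hfpos s hs).le)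
    (C := deriv u 1 ^ 2 / 2 + F (u 1)) fun t ht => ?_)
  obtain ⟨_, ⟨x, hx, rfl⟩, htx⟩ := not_bddAbove_iff.1 hunbdd t
  have henergy := energy_eq_of_hasDerivAt isOpen_Ioi isPreconnected_Ioi hu' hu'' hF hx
    (mem_Ioi.2 one_pos)
  calc F t ≤ F (u x) :=
        intervalIntegral.integral_mono_interval le_rfl ht htx.le
          (ae_restrict_of_forall_mem measurableSet_Ioc fun s hs => (hfpos s hs.1.le).le)
          ((hfcont.mono Icc_subset_Ici_self).intervalIntegrable_of_Icc (hupos x hx).le)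
    _ ≤ deriv u 1 ^ 2 / 2 + F (u 1) := by linarith [sq_nonneg (deriv u x)]
end
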